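/- If a sequence a_n has ordinary generating function given by the Jacobi continued fraction J(α_0, α_1, ...; β_1, β_2, ...), then its k-th binomial transform b_n = ∑_{i=0}^{n} C(n,i) k^{n-i} a_i has ordinary generating function J(α_0 + k, α_1 + k, ...; β_1, β_2, ...). -/

import Mathlib

open PowerSeries

/-- `jacobiAux α β d i` is the depth-`d` convergent of the Jacobi continued fraction
`1/(1 - αᵢ x - βᵢ x²/(1 - αᵢ₊₁ x - βᵢ₊₁ x²/(...)))`. -/
noncomputable def jacobiAux (α β : ℕ → ℚ) : ℕ → ℕ → PowerSeries ℚ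
  | 0, i => (1 - C (α i) * X)⁻¹
  | d + 1, i => (1 - C (α i) * X - C (β i) * X ^ 2 * jacobiAux α β d (i + 1))⁻¹

namespace JacobiBT

/-- The geometric series `∑ kⁿ xⁿ = 1/(1-kx)`. -/
noncomputable def invk (k : ℚ) : PowerSeries ℚ := PowerSeries.mk fun n => k ^ n

/-- `g(x) = x/(1-kx)`. -/
noncomputable def gk (k : ℚ) : PowerSeries ℚ := X * invk k

/-- The substitution `f ↦ f(x/(1-kx))`, defined coefficientwise. -/
noncomputable def Ssub (k : ℚ) (f : PowerSeries ℚ) : PowerSeries ℚ :=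
  PowerSeries.mk fun j =>
    ∑ i ∈ Finset.range (j + 1), PowerSeries.coeff i f * PowerSeries.coeff j (gk k ^ i)

/-- The binomial transform on generating functions: `f ↦ (1/(1-kx)) f(x/(1-kx))`. -/
noncomputable def Bt (k : ℚ) (f : PowerSeries ℚ) : PowerSeries ℚ := invk k * Ssub k f

theorem one_sub_mul_invk (k : ℚ) : (1 - C k * X) * invk k = 1 := by
  ext n
  rw [sub_mul, one_mul, map_sub, mul_assoc]
  cases n with
  | zero => simp [invk]
  | succ n =>
    rw [coeff_C_mul, coeff_succ_X_mul]
    simp [invk, pow_succ, mul_comm, coeff_one]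

theorem constantCoeff_one_sub (k : ℚ) :
    constantCoeff (1 - C k * X) ≠ 0 := by
  simp

theorem invk_mul_one_sub (k : ℚ) : invk k * (1 - C k * X) = 1 := by
  rw [mul_comm]; exact one_sub_mul_invk k

theorem invk_eq (k : ℚ) : (1 - C k * X)⁻¹ = invk k := by
  symm
  rw [PowerSeries.eq_inv_iff_mul_eq_one (constantCoeff_one_sub k)]
  exact invk_mul_one_sub k

theorem coeff_mul_gk_pow_of_lt (k : ℚ) (w : PowerSeries ℚ) {j i : ℕ} (h : j < i) :
    PowerSeries.coeff j (w * gk k ^ i) = 0 := by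
  have h1 : w * gk k ^ i = X ^ i * (w * invk k ^ i) := by
    rw [gk, mul_pow]; ring
  rw [h1, PowerSeries.coeff_X_pow_mul', if_neg (by omega)]

theorem coeff_mul_aeval (k : ℚ) (w : PowerSeries ℚ) (P : Polynomial ℚ) (j : ℕ) :
    PowerSeries.coeff j (w * Polynomial.aeval (gk k) P) =
      ∑ i ∈ Finset.range (j + 1), P.coeff i * PowerSeries.coeff j (w * gk k ^ i) := by
  set N := max (j + 1) (P.natDegree + 1) with hN
  have hdeg : P.natDegree < N := lt_of_lt_of_le (Nat.lt_succ_self _) (le_max_right _ _)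
  rw [Polynomial.aeval_eq_sum_range' hdeg, Finset.mul_sum, map_sum]
  have h1 : ∀ i ∈ Finset.range N,
      PowerSeries.coeff j (w * P.coeff i • gk k ^ i)
        = P.coeff i * PowerSeries.coeff j (w * gk k ^ i) := by
    intro i _
    rw [mul_smul_comm, map_smul, smul_eq_mul]
  rw [Finset.sum_congr rfl h1]
  symm
  apply Finset.sum_subset
  · exact Finset.range_subset_range.2 (le_max_left _ _)
  · intro i _ hi
    rw [Finset.mem_range, not_lt] at hi
    rw [coeff_mul_gk_pow_of_lt k w (by omega), mul_zero]

theorem coeff_aeval (k : ℚ) (P : Polynomial ℚ) (j : ℕ) :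
    PowerSeries.coeff j (Polynomial.aeval (gk k) P) =
      ∑ i ∈ Finset.range (j + 1), P.coeff i * PowerSeries.coeff j (gk k ^ i) := by
  have h := coeff_mul_aeval k 1 P j
  simpa using h

theorem coeff_Ssub (k : ℚ) (f : PowerSeries ℚ) {p j : ℕ} (hp : p ≤ j) :
    PowerSeries.coeff p (Ssub k f) =
      PowerSeries.coeff p (Polynomial.aeval (gk k) (trunc (j + 1) f)) := by
  rw [Ssub, coeff_mk, coeff_aeval]
  apply Finset.sum_congr rfl
  intro i hi
  rw [Finset.mem_range] at hi
  rw [coeff_trunc, if_pos (by omega)]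

theorem Ssub_mul (k : ℚ) (f g : PowerSeries ℚ) :
    Ssub k (f * g) = Ssub k f * Ssub k g := by
  ext j
  rw [PowerSeries.coeff_mul]
  have hr : ∀ p ∈ Finset.HasAntidiagonal.antidiagonal j,
      PowerSeries.coeff p.1 (Ssub k f) * PowerSeries.coeff p.2 (Ssub k g) =
        PowerSeries.coeff p.1 (Polynomial.aeval (gk k) (trunc (j + 1) f)) *
          PowerSeries.coeff p.2 (Polynomial.aeval (gk k) (trunc (j + 1) g)) := by
    intro p hp
    rw [Finset.HasAntidiagonal.mem_antidiagonal] at hp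
    rw [coeff_Ssub k f (show p.1 ≤ j by omega), coeff_Ssub k g (show p.2 ≤ j by omega)]
  rw [Finset.sum_congr rfl hr, ← PowerSeries.coeff_mul, ← map_mul,
    coeff_Ssub k (f * g) (le_refl j), coeff_aeval, coeff_aeval]
  apply Finset.sum_congr rfl
  intro i hi
  rw [Finset.mem_range] at hi
  congr 1
  rw [coeff_trunc, if_pos (by omega), ← Polynomial.coeff_coe, Polynomial.coe_mul]
  exact coeff_mul_eq_coeff_trunc_mul_trunc f g (show i < j + 1 by omega)

theorem Ssub_one (k : ℚ) : Ssub k 1 = 1 := by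
  ext j
  rw [Ssub, coeff_mk, Finset.sum_eq_single 0]
  · simp
  · intro i _ hi
    rw [coeff_one, if_neg hi, zero_mul]
  · intro h
    simp at h

theorem Ssub_C_mul (k a : ℚ) (f : PowerSeries ℚ) :
    Ssub k (C a * f) = C a * Ssub k f := by
  ext j
  rw [coeff_C_mul, Ssub, Ssub, coeff_mk, coeff_mk, Finset.mul_sum]
  apply Finset.sum_congr rfl
  intro i _
  rw [coeff_C_mul]
  ring

theorem Ssub_sub (k : ℚ) (f g : PowerSeries ℚ) :
    Ssub k (f - g) = Ssub k f - Ssub k g := by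
  ext j
  simp only [Ssub, coeff_mk, map_sub, sub_mul, Finset.sum_sub_distrib]

theorem Ssub_X (k : ℚ) : Ssub k X = gk k := by
  ext j
  rw [Ssub, coeff_mk, Finset.sum_eq_single 1]
  · simp [coeff_X]
  · intro i _ hi
    rw [coeff_X, if_neg hi, zero_mul]
  · intro h
    rw [Finset.mem_range, not_lt] at h
    have h0 : PowerSeries.coeff j (gk k ^ 1) = 0 := by
      simpa using coeff_mul_gk_pow_of_lt k 1 (show j < 1 by omega)
    rw [h0, mul_zero]

theorem constantCoeff_Ssub (k : ℚ) (f : PowerSeries ℚ) :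
    constantCoeff (Ssub k f) = constantCoeff f := by
  rw [← coeff_zero_eq_constantCoeff_apply, ← coeff_zero_eq_constantCoeff_apply, Ssub, coeff_mk]
  simp

theorem Bt_inv_eq (k : ℚ) (v u : PowerSeries ℚ) (hv : constantCoeff v ≠ 0)
    (hu : (1 - C k * X) ^ 2 * Bt k v = u) : Bt k v⁻¹ = u⁻¹ := by
  have hu0 : constantCoeff u ≠ 0 := by
    rw [← hu]
    simp only [map_mul, map_pow, Bt, map_sub, map_one, constantCoeff_X, mul_zero, sub_zero,
      constantCoeff_Ssub]
    have : constantCoeff (invk k) = 1 := by simp [invk, ← coeff_zero_eq_constantCoeff]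
    rw [this]
    simpa using hv
  rw [PowerSeries.eq_inv_iff_mul_eq_one hu0, ← hu]
  have h1 : Ssub k v⁻¹ * Ssub k v = 1 := by
    rw [← Ssub_mul, PowerSeries.inv_mul_cancel v hv, Ssub_one]
  have h2 := invk_mul_one_sub k
  calc Bt k v⁻¹ * ((1 - C k * X) ^ 2 * Bt k v)
      = (invk k * (1 - C k * X)) * (invk k * (1 - C k * X)) *
        (Ssub k v⁻¹ * Ssub k v) := by
        rw [Bt, Bt]; ring
    _ = 1 := by rw [h1, h2]; ring

theorem key (α β : ℕ → ℚ) (k : ℚ) :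
    ∀ d i, jacobiAux (fun n => α n + k) β d i = Bt k (jacobiAux α β d i) := by
  intro d
  induction d with
  | zero =>
    intro i
    show (1 - C (α i + k) * X)⁻¹ = Bt k (1 - C (α i) * X)⁻¹
    symm
    apply Bt_inv_eq
    · simp
    · have h2 := invk_mul_one_sub k
      rw [Bt, Ssub_sub, Ssub_one, Ssub_C_mul, Ssub_X, gk]
      calc (1 - C k * X) ^ 2 * (invk k * (1 - C (α i) * (X * invk k)))
          = (invk k * (1 - C k * X)) * (1 - C k * X) -
            C (α i) * X * ((invk k * (1 - C k * X)) * (invk k * (1 - C k * X))) := by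
            ring
        _ = 1 - C (α i + k) * X := by rw [h2, map_add]; ring
  | succ d ih =>
    intro i
    show (1 - C (α i + k) * X -
        C (β i) * X ^ 2 * jacobiAux (fun n => α n + k) β d (i + 1))⁻¹ =
      Bt k (1 - C (α i) * X - C (β i) * X ^ 2 * jacobiAux α β d (i + 1))⁻¹
    symm
    apply Bt_inv_eq
    · simp
    · have h2 := invk_mul_one_sub k
      rw [Bt, Ssub_sub, Ssub_sub, Ssub_one, Ssub_C_mul, Ssub_X,
        show C (β i) * X ^ 2 * jacobiAux α β d (i + 1) =
          C (β i) * (X * (X * jacobiAux α β d (i + 1))) from by ring,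
        Ssub_C_mul, Ssub_mul, Ssub_mul, Ssub_X, gk, ih (i + 1), Bt]
      calc (1 - C k * X) ^ 2 *
            (invk k * (1 - C (α i) * (X * invk k) -
              C (β i) * (X * invk k * (X * invk k * Ssub k (jacobiAux α β d (i + 1))))))
          = (invk k * (1 - C k * X)) * (1 - C k * X) -
            C (α i) * X * ((invk k * (1 - C k * X)) * (invk k * (1 - C k * X))) -
            C (β i) * X ^ 2 * ((invk k * (1 - C k * X)) * (invk k * (1 - C k * X)) *
              (invk k * Ssub k (jacobiAux α β d (i + 1)))) := by ring
        _ = 1 - C (α i + k) * X -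
            C (β i) * X ^ 2 * (invk k * Ssub k (jacobiAux α β d (i + 1))) := by
            rw [h2, map_add]; ring

theorem hockey (n i : ℕ) :
    ∑ a ∈ Finset.range (n + 1), (a + i).choose i = (n + i + 1).choose (i + 1) := by
  induction n with
  | zero => simp
  | succ n ih =>
    rw [Finset.sum_range_succ, ih, show n + 1 + i = n + i + 1 from by omega,
      Nat.choose_succ_succ (n + i + 1) i]
    simp [Nat.succ_eq_add_one]
    omega

theorem coeff_invk_pow (k : ℚ) (i : ℕ) :
    ∀ n, PowerSeries.coeff n (invk k ^ (i + 1)) = ((n + i).choose i : ℚ) * k ^ n := by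
  induction i with
  | zero => intro n; simp [invk]
  | succ i ih =>
    intro n
    rw [pow_succ, PowerSeries.coeff_mul, Finset.Nat.sum_antidiagonal_eq_sum_range_succ_mk]
    have h1 : ∀ a ∈ Finset.range (n + 1),
        PowerSeries.coeff a (invk k ^ (i + 1)) * PowerSeries.coeff (n - a) (invk k) =
          ((a + i).choose i : ℚ) * k ^ n := by
      intro a ha
      rw [Finset.mem_range] at ha
      rw [ih a, invk, coeff_mk, mul_assoc, ← pow_add,
        show a + (n - a) = n from by omega]
    rw [Finset.sum_congr rfl h1, ← Finset.sum_mul, ← Nat.cast_sum, hockey,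
      show n + i + 1 = n + (i + 1) from by omega]

theorem coeff_invk_mul_gk_pow (k : ℚ) {i j : ℕ} (hij : i ≤ j) :
    PowerSeries.coeff j (invk k * gk k ^ i) = (j.choose i : ℚ) * k ^ (j - i) := by
  have h1 : invk k * gk k ^ i = X ^ i * invk k ^ (i + 1) := by
    rw [gk, mul_pow, pow_succ]; ring
  rw [h1, show j = (j - i) + i from by omega, PowerSeries.coeff_X_pow_mul,
    coeff_invk_pow, show j - i + i = j from by omega]

theorem coeff_Bt (k : ℚ) (f : PowerSeries ℚ) (j : ℕ) :
    PowerSeries.coeff j (Bt k f) =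
      ∑ i ∈ Finset.range (j + 1),
        (j.choose i : ℚ) * k ^ (j - i) * PowerSeries.coeff i f := by
  rw [Bt, PowerSeries.coeff_mul]
  have hr : ∀ p ∈ Finset.HasAntidiagonal.antidiagonal j,
      PowerSeries.coeff p.1 (invk k) * PowerSeries.coeff p.2 (Ssub k f) =
        PowerSeries.coeff p.1 (invk k) *
          PowerSeries.coeff p.2 (Polynomial.aeval (gk k) (trunc (j + 1) f)) := by
    intro p hp
    rw [Finset.HasAntidiagonal.mem_antidiagonal] at hp
    rw [coeff_Ssub k f (show p.2 ≤ j by omega)]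
  rw [Finset.sum_congr rfl hr, ← PowerSeries.coeff_mul, coeff_mul_aeval]
  apply Finset.sum_congr rfl
  intro i hi
  rw [Finset.mem_range] at hi
  rw [coeff_trunc, if_pos (by omega), coeff_invk_mul_gk_pow k (show i ≤ j by omega)]
  ring

end JacobiBT

/-- If a sequence has o.g.f. the Jacobi continued fraction `J(α₀,α₁,…; β₁,β₂,…)`,
then its `k`-th binomial transform has o.g.f. `J(α₀+k,α₁+k,…; β₁,β₂,…)`: at the level
of the `m`-th convergents, the coefficients agree to the appropriate order. -/
theorem jacobi_cf_binomial_transform (α β : ℕ → ℚ) (k : ℚ) (m j : ℕ)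
    (hj : j ≤ 2 * m + 1) :
    PowerSeries.coeff j (jacobiAux (fun i => α i + k) β m 0) =
      ∑ i ∈ Finset.range (j + 1),
        (j.choose i : ℚ) * k ^ (j - i) * PowerSeries.coeff i (jacobiAux α β m 0) := by
  rw [JacobiBT.key α β k m 0, JacobiBT.coeff_Bt]
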